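/- arXiv:2006.14369 — 2 statements merged into one kernel-verified Lean document; each statement's English description precedes it below -/
import Mathlib

section
/- Let M be a compact metric space, φ a continuous flow on M, and H ⊆ M a compact invariant set. Then H has the strong pseudo-orbit tracing property (SPOTP) if and only if H has the strong finite pseudo-orbit tracing property (SFPOTP). -/
/-- Partial time sums of a bi-infinite chain: `S 0 = 0`, `S i = t 0 + ⋯ + t (i-1)` for `i > 0`,
and `S i = -(t (-1) + ⋯ + t i)` for `i < 0`. -/
noncomputable def chainS (t : ℤ → ℝ) (i : ℤ) : ℝ :=
  if 0 ≤ i then ∑ j ∈ Finset.range i.toNat, t (j : ℤ)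
  else -∑ j ∈ Finset.range (-i).toNat, t (-((j : ℤ) + 1))

/-- Partial time sums of a finite chain: `S 0 = 0`, `S i = t 0 + ⋯ + t (i-1)`. -/
noncomputable def finChainS (t : ℕ → ℝ) (i : ℕ) : ℝ := ∑ j ∈ Finset.range i, t j

/-- `g` is a reparametrization: continuous, strictly increasing, `g 0 = 0`. -/
def IsRep (g : ℝ → ℝ) : Prop := Continuous g ∧ StrictMono g ∧ g 0 = 0

/-- `g` is a surjective reparametrization (the class `Rep*`). -/
def IsRepStar (g : ℝ → ℝ) : Prop := IsRep g ∧ Function.Surjective g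

/-- The class `Rep(ε)`: surjective reparametrizations whose difference quotients are
ε-close to 1. -/
def IsRepEps (ε : ℝ) (g : ℝ → ℝ) : Prop :=
  IsRepStar g ∧ ∀ s t : ℝ, s ≠ t → |(g s - g t) / (s - t) - 1| ≤ ε

variable {M : Type*} [MetricSpace M]

/-- `{x i ; t i}_{i ∈ ℤ}` is a (bi-infinite) `(δ,T)`-chain of `H` for the flow `φ`. -/
def IsChainDT (φ : ℝ → M → M) (H : Set M) (δ T : ℝ) (x : ℤ → M) (t : ℤ → ℝ) : Prop :=
  (∀ i, x i ∈ H) ∧ (∀ i, T ≤ t i) ∧ ∀ i, dist (φ (t i) (x i)) (x (i + 1)) ≤ δ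

/-- `{x i ; t i}_{i = 0}^{k}` is a finite `(δ,T)`-chain of `H` for the flow `φ`. -/
def IsFinChainDT (φ : ℝ → M → M) (H : Set M) (δ T : ℝ) (k : ℕ) (x : ℕ → M) (t : ℕ → ℝ) :
    Prop :=
  (∀ i ≤ k, x i ∈ H) ∧ (∀ i ≤ k, T ≤ t i) ∧ ∀ i < k, dist (φ (t i) (x i)) (x (i + 1)) ≤ δ

/-- The chain trajectory `x₀ * s = φ (s - S i) (x i)` (for `S i ≤ s < S (i+1)`) of a bi-infinite
chain is ε-close, for all real times `s`, to the `g`-reparametrized orbit of `z`. -/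
def TracedVia (φ : ℝ → M → M) (ε : ℝ) (x : ℤ → M) (t : ℤ → ℝ) (g : ℝ → ℝ) (z : M) : Prop :=
  ∀ i : ℤ, ∀ s : ℝ, chainS t i ≤ s → s < chainS t (i + 1) →
    dist (φ (s - chainS t i) (x i)) (φ (g s) z) ≤ ε

/-- The chain trajectory of a finite chain is ε-close, for all times `s ∈ [0, S (k+1)]`,
to the `g`-reparametrized orbit of `z`. -/
def FinTracedVia (φ : ℝ → M → M) (ε : ℝ) (k : ℕ) (x : ℕ → M) (t : ℕ → ℝ)
    (g : ℝ → ℝ) (z : M) : Prop :=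
  (∀ i ≤ k, ∀ s : ℝ, finChainS t i ≤ s → s < finChainS t (i + 1) →
    dist (φ (s - finChainS t i) (x i)) (φ (g s) z) ≤ ε) ∧
  dist (φ (t k) (x k)) (φ (g (finChainS t (k + 1))) z) ≤ ε

/-- Weak pseudo-orbit tracing property. -/
def WPOTP (φ : ℝ → M → M) (H : Set M) : Prop :=
  ∀ ε > (0 : ℝ), ∃ δ > (0 : ℝ), ∃ T > (0 : ℝ), ∀ x t, IsChainDT φ H δ T x t →
    ∃ z : M, ∃ g : ℝ → ℝ, IsRep g ∧ TracedVia φ ε x t g z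

/-- Normal pseudo-orbit tracing property. -/
def NPOTP (φ : ℝ → M → M) (H : Set M) : Prop :=
  ∀ ε > (0 : ℝ), ∃ δ > (0 : ℝ), ∃ T > (0 : ℝ), ∀ x t, IsChainDT φ H δ T x t →
    ∃ z : M, ∃ g : ℝ → ℝ, IsRepStar g ∧ TracedVia φ ε x t g z

/-- Strong pseudo-orbit tracing property. -/
def SPOTP (φ : ℝ → M → M) (H : Set M) : Prop :=
  ∀ ε > (0 : ℝ), ∃ δ > (0 : ℝ), ∃ T > (0 : ℝ), ∀ x t, IsChainDT φ H δ T x t →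
    ∃ z : M, ∃ g : ℝ → ℝ, IsRepEps ε g ∧ TracedVia φ ε x t g z

/-- Finite pseudo-orbit tracing property. -/
def FPOTP (φ : ℝ → M → M) (H : Set M) : Prop :=
  ∀ ε > (0 : ℝ), ∃ δ > (0 : ℝ), ∃ T > (0 : ℝ), ∀ k x t, IsFinChainDT φ H δ T k x t →
    ∃ z : M, ∃ g : ℝ → ℝ, IsRep g ∧ FinTracedVia φ ε k x t g z

/-- Strong finite pseudo-orbit tracing property. -/
def SFPOTP (φ : ℝ → M → M) (H : Set M) : Prop :=
  ∀ ε > (0 : ℝ), ∃ δ > (0 : ℝ), ∃ T > (0 : ℝ), ∀ k x t, IsFinChainDT φ H δ T k x t →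
    ∃ z : M, ∃ g : ℝ → ℝ, IsRepEps ε g ∧ FinTracedVia φ ε k x t g z



/-!
A finite chain extends to a bi-infinite one by following the orbits of its two end points for
ever; the new jumps are zero, and a tracing orbit of the extension traces the original chain.

Conversely, truncate a bi-infinite chain to the windows `[-n, n]` and trace each of them by an
orbit `z n` with a reparametrization `g n`. After shifting time so that every reparametrization
fixes `0`, the `g n` lie in the set of maps `g` with `g 0 = 0` whose difference quotients are
`ε`-close to `1`; by Tychonoff this set is compact in the product topology, so the pairs
`(z n, g n)` have a cluster point `(z, g)`. Each tracing estimate at a fixed time is a closed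
condition that holds for all large `n`, hence for `(z, g)`, and for `ε < 1` the bound on the
difference quotients alone makes `g` a surjective reparametrization.
-/

open Set Filter Topology

lemma chainS_add_one (t : ℤ → ℝ) (i : ℤ) : chainS t (i + 1) = chainS t i + t i := by
  unfold chainS
  rcases le_or_gt 0 i with h | h
  · rw [if_pos (by omega), if_pos h, show (i + 1).toNat = i.toNat + 1 by omega,
      Finset.sum_range_succ, Int.ofNat_toNat, max_eq_left h]
  · rcases eq_or_lt_of_le (show i ≤ -1 by omega) with rfl | h'
    · simp
    · rw [if_neg (by omega), if_neg (by omega),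
        show (-i).toNat = (-(i + 1)).toNat + 1 by omega, Finset.sum_range_succ,
        show -(((-(i + 1)).toNat : ℤ) + 1) = i by omega]
      ring

lemma chainS_natCast (t : ℤ → ℝ) (n : ℕ) : chainS t n = ∑ j ∈ Finset.range n, t j := by
  simp [chainS]

lemma finChainS_shift (t : ℤ → ℝ) (m : ℤ) (i : ℕ) :
    finChainS (fun j => t (j + m)) i = chainS t (i + m) - chainS t m := by
  induction i with
  | zero => simp [finChainS]
  | succ i ih =>
    rw [finChainS, Finset.sum_range_succ, ← finChainS, ih, Nat.cast_succ, add_right_comm,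
      chainS_add_one]
    ring

section Reparametrization

/-- For `ε < 1` these are exactly the elements of `Rep(ε)`. -/
def normalizedRepEps (ε : ℝ) : Set (ℝ → ℝ) :=
  {g | g 0 = 0 ∧ ∀ s t, s ≠ t → |(g s - g t) / (s - t) - 1| ≤ ε}

variable {ε : ℝ} {g : ℝ → ℝ}

lemma abs_sub_sub_le_of_mem_normalizedRepEps (hg : g ∈ normalizedRepEps ε) (s t : ℝ) :
    |g s - g t - (s - t)| ≤ ε * |s - t| := by
  rcases eq_or_ne s t with rfl | hst
  · simp
  · have hst' : 0 < |s - t| := abs_pos.2 (sub_ne_zero.2 hst)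
    have := hg.2 s t hst
    rwa [div_sub_one (sub_ne_zero.2 hst), abs_div, div_le_iff₀ hst'] at this

lemma mem_Icc_of_mem_normalizedRepEps (hg : g ∈ normalizedRepEps ε) (s : ℝ) :
    g s ∈ Icc (s - ε * |s|) (s + ε * |s|) := by
  have := abs_sub_sub_le_of_mem_normalizedRepEps hg s 0
  rw [hg.1, sub_zero, sub_zero, abs_le] at this
  constructor <;> linarith [this.1, this.2]

lemma isCompact_normalizedRepEps (ε : ℝ) : IsCompact (normalizedRepEps ε) := by
  refine (isCompact_univ_pi fun s => isCompact_Icc).of_isClosed_subset ?_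
    fun g hg s _ => mem_Icc_of_mem_normalizedRepEps hg s
  refine (isClosed_eq (continuous_apply 0) continuous_const).inter ?_
  show IsClosed {g : ℝ → ℝ | ∀ s t, s ≠ t → |(g s - g t) / (s - t) - 1| ≤ ε}
  simp only [ofPred_forall]
  exact isClosed_iInter fun s => isClosed_iInter fun t => isClosed_iInter fun _ =>
    isClosed_le (by fun_prop) continuous_const

lemma isRepEps_iff_mem_normalizedRepEps (hε : ε < 1) :
    IsRepEps ε g ↔ g ∈ normalizedRepEps ε := by
  refine ⟨fun hg => ⟨hg.1.1.2.2, hg.2⟩, fun hg => ?_⟩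
  have hdiff := abs_sub_sub_le_of_mem_normalizedRepEps hg
  have hlower : ∀ s t, t ≤ s → (1 - ε) * (s - t) ≤ g s - g t := fun s t hts => by
    have := (abs_le.1 (hdiff s t)).1
    rw [abs_of_nonneg (sub_nonneg.2 hts)] at this
    linarith
  have hcont : Continuous g := by
    refine (LipschitzWith.of_dist_le' (K := 1 + ε) fun s t => ?_).continuous
    rw [Real.dist_eq, Real.dist_eq]
    have := abs_le.1 (hdiff s t)
    exact abs_le.2 ⟨by linarith [neg_abs_le (s - t)], by linarith [le_abs_self (s - t)]⟩
  have h1ε : 0 < 1 - ε := sub_pos.2 hε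
  refine ⟨⟨⟨hcont, fun t s hts => by nlinarith [hlower s t hts.le], hg.1⟩, ?_⟩, hg.2⟩
  refine hcont.surjective ?_ ?_
  · refine tendsto_atTop_mono' _ ?_ (tendsto_id.const_mul_atTop h1ε)
    filter_upwards [eventually_ge_atTop 0] with s hs
    simpa [hg.1] using hlower s 0 hs
  · refine tendsto_atBot_mono' _ ?_ (tendsto_id.const_mul_atBot h1ε)
    filter_upwards [eventually_le_atBot 0] with s hs
    have := hlower 0 s hs
    rw [hg.1] at this
    simp only [id]
    linarith

lemma IsRepEps.mono {ε' : ℝ} (hg : IsRepEps ε g) (hεε' : ε ≤ ε') : IsRepEps ε' g :=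
  ⟨hg.1, fun s t hst => (hg.2 s t hst).trans hεε'⟩

lemma IsRepEps.comp_sub_sub_mem_normalizedRepEps (hg : IsRepEps ε g) (c : ℝ) :
    (fun s => g (s - c) - g (-c)) ∈ normalizedRepEps ε := by
  refine ⟨by simp, fun s t hst => ?_⟩
  have := hg.2 (s - c) (t - c) (by simpa using hst)
  rwa [sub_sub_sub_cancel_right, ← sub_sub_sub_cancel_right (g (s - c)) _ (g (-c))] at this

end Reparametrization

section Chains

variable {φ : ℝ → M → M} {H : Set M} {δ T ε : ℝ} {g : ℝ → ℝ} {z : M}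

lemma IsChainDT.restrict {x : ℤ → M} {t : ℤ → ℝ} (h : IsChainDT φ H δ T x t) (m : ℤ) (k : ℕ) :
    IsFinChainDT φ H δ T k (fun i => x (i + m)) (fun i => t (i + m)) :=
  ⟨fun _ _ => h.1 _, fun _ _ => h.2.1 _, fun i _ => by
    simpa only [Nat.cast_succ, add_right_comm] using h.2.2 (i + m)⟩

lemma FinTracedVia.dist_le_of_restrict {k : ℕ} {x : ℤ → M} {t : ℤ → ℝ} {m : ℤ}
    (h : FinTracedVia φ ε k (fun i => x (i + m)) (fun i => t (i + m)) g z)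
    {j : ℤ} (hmj : m ≤ j) (hjk : j ≤ m + k) {s : ℝ}
    (hs₁ : chainS t j ≤ s) (hs₂ : s < chainS t (j + 1)) :
    dist (φ (s - chainS t j) (x j)) (φ (g (s - chainS t m)) z) ≤ ε := by
  obtain ⟨i, rfl⟩ : ∃ i : ℕ, j = i + m := ⟨(j - m).toNat, by omega⟩
  have := h.1 i (by omega) (s - chainS t m)
    (by rw [finChainS_shift]; linarith)
    (by rw [finChainS_shift, Nat.cast_succ, add_right_comm]; linarith)
  rwa [finChainS_shift, sub_sub_sub_cancel_right] at this

end Chains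

section Extension

variable {X : Type*} {φ : ℝ → X → X} {T : ℝ} {k : ℕ} {x : ℕ → X} {t : ℕ → ℝ}

def extendPoints (φ : ℝ → X → X) (T : ℝ) (k : ℕ) (x : ℕ → X) (t : ℕ → ℝ) (i : ℤ) : X :=
  if i < 0 then φ (i * T) (x 0)
  else if i ≤ k then x i.toNat
  else φ ((i - (k + 1)) * T) (φ (t k) (x k))

def extendTimes (T : ℝ) (k : ℕ) (t : ℕ → ℝ) (i : ℤ) : ℝ :=
  if 0 ≤ i ∧ i ≤ k then t i.toNat else T

lemma extendPoints_natCast {i : ℕ} (hi : i ≤ k) : extendPoints φ T k x t i = x i := by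
  simp [extendPoints, hi]

lemma extendPoints_of_nonpos (hφ0 : ∀ y, φ 0 y = y) {i : ℤ} (hi : i ≤ 0) :
    extendPoints φ T k x t i = φ (i * T) (x 0) := by
  rcases hi.lt_or_eq with hi | rfl
  · simp [extendPoints, hi]
  · simp [extendPoints, hφ0]

lemma extendPoints_of_lt {i : ℤ} (hi : k < i) :
    extendPoints φ T k x t i = φ ((i - (k + 1)) * T) (φ (t k) (x k)) := by
  simp [extendPoints, hi.not_ge, (show (0 : ℤ) ≤ i by omega).not_gt]

lemma extendPoints_last_add_one (hφ0 : ∀ y, φ 0 y = y) :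
    extendPoints φ T k x t (k + 1) = φ (t k) (x k) := by
  simp [extendPoints_of_lt, hφ0]

lemma extendTimes_natCast {i : ℕ} (hi : i ≤ k) : extendTimes T k t i = t i := by
  simp [extendTimes, hi]

lemma extendTimes_of_neg_or_lt {i : ℤ} (hi : i < 0 ∨ k < i) : extendTimes T k t i = T := by
  simp only [extendTimes]
  rw [if_neg (by omega)]

lemma flow_extendTimes_extendPoints (hφ0 : ∀ y, φ 0 y = y)
    (hφadd : ∀ a b y, φ (a + b) y = φ a (φ b y)) {i : ℤ} (hi : i < 0 ∨ k ≤ i) :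
    φ (extendTimes T k t i) (extendPoints φ T k x t i) = extendPoints φ T k x t (i + 1) := by
  rcases hi with hi | hi
  · rw [extendTimes_of_neg_or_lt (.inl hi), extendPoints_of_nonpos hφ0 hi.le,
      extendPoints_of_nonpos hφ0 (by omega), ← hφadd]
    push_cast
    ring_nf
  · rcases hi.lt_or_eq with hi | rfl
    · rw [extendTimes_of_neg_or_lt (.inr hi), extendPoints_of_lt hi, extendPoints_of_lt (by omega),
        ← hφadd]
      push_cast
      ring_nf
    · rw [extendTimes_natCast le_rfl, extendPoints_natCast le_rfl,
        extendPoints_last_add_one hφ0]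

end Extension

section Tracing

variable {φ : ℝ → M → M} {H : Set M} {δ T ε : ℝ} {g : ℝ → ℝ} {z : M}
  {k : ℕ} {x : ℕ → M} {t : ℕ → ℝ}

lemma IsFinChainDT.extend (hφ0 : ∀ y, φ 0 y = y) (hφadd : ∀ a b y, φ (a + b) y = φ a (φ b y))
    (hH : ∀ τ, MapsTo (φ τ) H H) (hδ : 0 ≤ δ) (h : IsFinChainDT φ H δ T k x t) :
    IsChainDT φ H δ T (extendPoints φ T k x t) (extendTimes T k t) := by
  refine ⟨fun i => ?_, fun i => ?_, fun i => ?_⟩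
  · rcases lt_or_ge i 0 with hi | hi
    · rw [extendPoints_of_nonpos hφ0 hi.le]
      exact hH _ (h.1 0 k.zero_le)
    rcases le_or_gt i k with hik | hik
    · lift i to ℕ using hi
      rw [extendPoints_natCast (by exact_mod_cast hik)]
      exact h.1 i (by exact_mod_cast hik)
    · rw [extendPoints_of_lt hik]
      exact hH _ (hH _ (h.1 k le_rfl))
  · by_cases hi : 0 ≤ i ∧ i ≤ k
    · lift i to ℕ using hi.1
      rw [extendTimes_natCast (by exact_mod_cast hi.2)]
      exact h.2.1 i (by exact_mod_cast hi.2)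
    · rw [extendTimes_of_neg_or_lt (by omega)]
  · by_cases hi : 0 ≤ i ∧ i < k
    · lift i to ℕ using hi.1
      have hik : i < k := by exact_mod_cast hi.2
      rw [extendTimes_natCast hik.le, extendPoints_natCast hik.le, ← Nat.cast_succ,
        extendPoints_natCast hik]
      exact h.2.2 i hik
    · rw [flow_extendTimes_extendPoints hφ0 hφadd (by omega), dist_self]
      exact hδ

lemma TracedVia.finTracedVia (hφ0 : ∀ y, φ 0 y = y) {x' : ℤ → M} {t' : ℤ → ℝ}
    (h : TracedVia φ ε x' t' g z) (hx : ∀ i ≤ k, x' i = x i) (ht : ∀ i ≤ k, t' i = t i)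
    (hend : x' (k + 1) = φ (t k) (x k)) (hpos : 0 < t' (k + 1)) :
    FinTracedVia φ ε k x t g z := by
  have hS : ∀ i ≤ k + 1, chainS t' i = finChainS t i := fun i hi => by
    rw [chainS_natCast, finChainS]
    exact Finset.sum_congr rfl fun j hj => ht j (by rw [Finset.mem_range] at hj; omega)
  refine ⟨fun i hi s hs₁ hs₂ => ?_, ?_⟩
  · have := h i s (by rwa [hS i (by omega)]) (by rwa [← Nat.cast_succ, hS (i + 1) (by omega)])
    rwa [hS i (by omega), hx i hi] at this
  · have hSk : chainS t' (k + 1) = finChainS t (k + 1) := by exact_mod_cast hS (k + 1) le_rfl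
    have := h (k + 1) (finChainS t (k + 1)) hSk.le (by rw [chainS_add_one, hSk]; linarith)
    rwa [hSk, sub_self, hφ0, hend] at this

end Tracing

section Equivalence

variable {φ : ℝ → M → M} {H : Set M}

theorem SPOTP.sfpotp (hφ0 : ∀ y, φ 0 y = y) (hφadd : ∀ a b y, φ (a + b) y = φ a (φ b y))
    (hH : ∀ τ, MapsTo (φ τ) H H) (h : SPOTP φ H) : SFPOTP φ H := by
  intro ε hε
  obtain ⟨δ, hδ, T, hT, htrace⟩ := h ε hε
  refine ⟨δ, hδ, T, hT, fun k x t hchain => ?_⟩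
  obtain ⟨z, g, hg, hzg⟩ := htrace _ _ (hchain.extend hφ0 hφadd hH hδ.le)
  refine ⟨z, g, hg, hzg.finTracedVia hφ0 (fun i hi => extendPoints_natCast hi)
    (fun i hi => extendTimes_natCast hi) (extendPoints_last_add_one hφ0) ?_⟩
  rwa [extendTimes_of_neg_or_lt (.inr (by omega))]

theorem SFPOTP.spotp [CompactSpace M] (hφ : Continuous fun p : ℝ × M => φ p.1 p.2)
    (hφadd : ∀ a b y, φ (a + b) y = φ a (φ b y)) (h : SFPOTP φ H) : SPOTP φ H := by
  intro ε hε
  set ε' := min ε (1 / 2)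
  obtain ⟨δ, hδ, T, hT, htrace⟩ := h ε' (by positivity)
  refine ⟨δ, hδ, T, hT, fun x t hchain => ?_⟩
  choose z g hg hzg using fun n : ℕ => htrace (2 * n) _ _ (hchain.restrict (-n) (2 * n))
  set c : ℕ → ℝ := fun n => chainS t (-n)
  set u : ℕ → M × (ℝ → ℝ) := fun n => (φ (g n (-c n)) (z n), fun s => g n (s - c n) - g n (-c n))
  obtain ⟨p, hpK, hp⟩ := (isCompact_univ.prod (isCompact_normalizedRepEps ε')).exists_mapClusterPt
    (f := atTop) (u := u) (tendsto_principal.2 (Eventually.of_forall fun n =>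
      ⟨trivial, (hg n).comp_sub_sub_mem_normalizedRepEps (c n)⟩))
  have hp₂ : IsRepEps ε' p.2 :=
    (isRepEps_iff_mem_normalizedRepEps ((min_le_right _ _).trans_lt (by norm_num))).2 hpK.2
  refine ⟨p.1, p.2, hp₂.mono (min_le_left _ _), fun j s hs₁ hs₂ => ?_⟩
  have hclosed : IsClosed
      {q : M × (ℝ → ℝ) | dist (φ (s - chainS t j) (x j)) (φ (q.2 s) q.1) ≤ ε'} :=
    isClosed_le (continuous_const.dist
      (hφ.comp (f := fun q : M × (ℝ → ℝ) => (q.2 s, q.1)) (by fun_prop))) continuous_const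
  refine (hclosed.mem_of_mapClusterPt hp ?_).trans (min_le_left _ _)
  filter_upwards [eventually_ge_atTop j.natAbs] with n hn
  have := (hzg n).dist_le_of_restrict (by omega) (by push_cast; omega) hs₁ hs₂
  simpa [u, ← hφadd] using this

end Equivalence

theorem spotp_iff_sfpotp_general {M : Type*} [MetricSpace M] [CompactSpace M]
    (φ : ℝ → M → M)
    (hflow_cont : Continuous fun p : ℝ × M => φ p.1 p.2)
    (hflow_zero : ∀ x : M, φ 0 x = x)
    (hflow_add : ∀ s t : ℝ, ∀ x : M, φ (s + t) x = φ s (φ t x))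
    (H : Set M) (hHinv : ∀ τ : ℝ, φ τ '' H = H) :
    SPOTP φ H ↔ SFPOTP φ H :=
  ⟨SPOTP.sfpotp hflow_zero hflow_add fun τ => mapsTo_iff_image_subset.2 (hHinv τ).le,
    SFPOTP.spotp hflow_cont hflow_add⟩

theorem spotp_iff_sfpotp {M : Type*} [MetricSpace M] [CompactSpace M]
    (φ : ℝ → M → M)
    (hflow_cont : Continuous fun p : ℝ × M => φ p.1 p.2)
    (hflow_zero : ∀ x : M, φ 0 x = x)
    (hflow_add : ∀ s t : ℝ, ∀ x : M, φ (s + t) x = φ s (φ t x))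
    (H : Set M) (hHcomp : IsCompact H) (hHinv : ∀ τ : ℝ, φ τ '' H = H) :
    SPOTP φ H ↔ SFPOTP φ H :=
  spotp_iff_sfpotp_general φ hflow_cont hflow_zero hflow_add H hHinv
end

section
/- Let M be a compact metric space, φ a continuous flow on M, and H ⊆ M a compact invariant set. Then H has the finite pseudo-orbit tracing property (FPOTP) if and only if for every ε > 0 and every T > 0 there exists δ > 0 such that every finite (δ,T)-chain of H is weakly ε-traced by some point of M. -/
variable {M : Type*} [MetricSpace M]

/-!
Only the forward direction needs an argument. Given `ε` and a small `T`, let `δ₀, T₀` be the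
FPOTP constants for `ε / 2`, and sample the chain trajectory of a `(δ, T)`-chain at the times
`j T₀`. Between two times at most `T₀` apart the trajectory jumps at most `T₀ / T + 1` times, and
by uniform continuity of the flow on `[0, T₀] × M` each jump of size `≤ δ` is carried forward
with a small error; so for small `δ` the trajectory drifts from the true orbit by at most
`min δ₀ (ε / 2)` over time `T₀`. Hence the samples form a `(δ₀, T₀)`-chain of `H`, and a point
tracing it within `ε / 2` traces the original chain within `ε`.
-/

section ChainTrajectory

variable {X : Type*} {φ : ℝ → X → X} {T : ℝ} {t : ℕ → ℝ} {k : ℕ} {x : ℕ → X}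

lemma finChainS_zero (t : ℕ → ℝ) : finChainS t 0 = 0 := by
  simp [finChainS]

lemma finChainS_succ (t : ℕ → ℝ) (i : ℕ) : finChainS t (i + 1) = finChainS t i + t i := by
  simp [finChainS, Finset.sum_range_succ]

lemma finChainS_const (L : ℝ) (j : ℕ) : finChainS (fun _ => L) j = j * L := by
  simp [finChainS]

lemma sub_mul_le_finChainS_sub (ht : ∀ i ≤ k, T ≤ t i) {i j : ℕ} (hij : i ≤ j)
    (hj : j ≤ k + 1) : ((j - i : ℕ) : ℝ) * T ≤ finChainS t j - finChainS t i := by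
  rw [finChainS, finChainS, ← Finset.sum_Ico_eq_sub _ hij]
  simpa [nsmul_eq_mul] using Finset.card_nsmul_le_sum (Finset.Ico i j) t T
    fun l hl => ht l (by have := (Finset.mem_Ico.mp hl).2; omega)

lemma finChainS_mono (hT : 0 ≤ T) (ht : ∀ i ≤ k, T ≤ t i) {i j : ℕ} (hij : i ≤ j)
    (hj : j ≤ k + 1) : finChainS t i ≤ finChainS t j := by
  have := sub_mul_le_finChainS_sub ht hij hj
  nlinarith [Nat.cast_nonneg (α := ℝ) (j - i)]

lemma finChainS_nonneg (hT : 0 ≤ T) (ht : ∀ i ≤ k, T ≤ t i) {i : ℕ} (hi : i ≤ k + 1) :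
    0 ≤ finChainS t i :=
  finChainS_zero t ▸ finChainS_mono hT ht (Nat.zero_le i) hi

noncomputable def chainIdx (t : ℕ → ℝ) (k : ℕ) (s : ℝ) : ℕ :=
  Nat.findGreatest (fun i => finChainS t i ≤ s) k

/-- The chain trajectory `x₀ * s`; after `S (k + 1)` it follows the orbit of `x k`. -/
noncomputable def chainTraj (φ : ℝ → X → X) (x : ℕ → X) (t : ℕ → ℝ) (k : ℕ) (s : ℝ) : X :=
  φ (s - finChainS t (chainIdx t k s)) (x (chainIdx t k s))

lemma chainIdx_le (t : ℕ → ℝ) (k : ℕ) (s : ℝ) : chainIdx t k s ≤ k :=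
  Nat.findGreatest_le k

lemma finChainS_chainIdx_le {s : ℝ} (hs : 0 ≤ s) : finChainS t (chainIdx t k s) ≤ s :=
  Nat.findGreatest_spec (P := fun i => finChainS t i ≤ s) (Nat.zero_le k)
    (by rwa [finChainS_zero])

lemma le_chainIdx {i : ℕ} {s : ℝ} (hi : i ≤ k) (h : finChainS t i ≤ s) : i ≤ chainIdx t k s :=
  Nat.le_findGreatest hi h

lemma lt_finChainS_of_chainIdx_lt {i : ℕ} {s : ℝ} (h : chainIdx t k s < i) (hi : i ≤ k) :
    s < finChainS t i :=
  lt_of_not_ge (Nat.findGreatest_is_greatest h hi)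

lemma chainIdx_mono {a b : ℝ} (ha : 0 ≤ a) (hab : a ≤ b) : chainIdx t k a ≤ chainIdx t k b :=
  le_chainIdx (chainIdx_le t k a) ((finChainS_chainIdx_le ha).trans hab)

lemma chainIdx_eq (hT : 0 < T) (ht : ∀ i ≤ k, T ≤ t i) {i : ℕ} {s : ℝ} (hi : i ≤ k)
    (h₁ : finChainS t i ≤ s) (h₂ : s < finChainS t (i + 1)) : chainIdx t k s = i := by
  refine le_antisymm (not_lt.mp fun hlt => ?_) (le_chainIdx hi h₁)
  have hs : 0 ≤ s := (finChainS_nonneg hT.le ht (by omega)).trans h₁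
  have := finChainS_mono hT.le ht hlt (by have := chainIdx_le t k s; omega)
  linarith [finChainS_chainIdx_le (t := t) (k := k) hs]

lemma chainIdx_finChainS (hT : 0 < T) (ht : ∀ i ≤ k, T ≤ t i) {i : ℕ} (hi : i ≤ k) :
    chainIdx t k (finChainS t i) = i :=
  chainIdx_eq hT ht hi le_rfl (by linarith [finChainS_succ t i, ht i hi])

lemma chainTraj_finChainS (hφ₀ : ∀ y, φ 0 y = y) (hT : 0 < T) (ht : ∀ i ≤ k, T ≤ t i)
    {i : ℕ} (hi : i ≤ k) : chainTraj φ x t k (finChainS t i) = x i := by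
  rw [chainTraj, chainIdx_finChainS hT ht hi, sub_self, hφ₀]

lemma chainTraj_mem {H : Set X} (hH : ∀ τ, Set.MapsTo (φ τ) H H)
    (hx : ∀ i ≤ k, x i ∈ H) (s : ℝ) : chainTraj φ x t k s ∈ H :=
  hH (s - finChainS t (chainIdx t k s)) (hx _ (chainIdx_le t k s))

lemma flow_chainTraj_of_chainIdx_eq (hφ : ∀ s t y, φ (s + t) y = φ s (φ t y)) {a : ℝ} {i : ℕ}
    (hi : chainIdx t k a = i) (s : ℝ) :
    φ (s - a) (chainTraj φ x t k a) = φ (s - finChainS t i) (x i) := by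
  rw [chainTraj, hi, ← hφ]
  ring_nf

lemma chainIdx_sub_le (hT : 0 < T) (ht : ∀ i ≤ k, T ≤ t i) {a b : ℝ} (ha : 0 ≤ a)
    (hab : a ≤ b) : ((chainIdx t k b - chainIdx t k a : ℕ) : ℝ) ≤ (b - a) / T + 1 := by
  rcases le_or_gt (chainIdx t k b) (chainIdx t k a) with hle | hlt
  · rw [Nat.sub_eq_zero_of_le hle, Nat.cast_zero]
    have : 0 ≤ (b - a) / T := div_nonneg (by linarith) hT.le
    linarith
  · have hbk := chainIdx_le t k b
    have hgap := sub_mul_le_finChainS_sub ht (i := chainIdx t k a + 1) hlt (by omega)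
    have ha' := lt_finChainS_of_chainIdx_lt (t := t) (k := k) (s := a) (lt_add_one _) (by omega)
    have hb' := finChainS_chainIdx_le (t := t) (k := k) (ha.trans hab)
    have hn : ((chainIdx t k b - (chainIdx t k a + 1) : ℕ) : ℝ) ≤ (b - a) / T := by
      rw [le_div_iff₀ hT]
      linarith
    have hcast : ((chainIdx t k b - chainIdx t k a : ℕ) : ℝ) =
        ((chainIdx t k b - (chainIdx t k a + 1) : ℕ) : ℝ) + 1 := by
      rw [← Nat.cast_add_one, Nat.sub_add_eq, Nat.sub_add_cancel (by omega)]
    linarith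

end ChainTrajectory

section Drift

variable {φ : ℝ → M → M} {T : ℝ} {t : ℕ → ℝ} {k : ℕ} {x : ℕ → M}

lemma exists_forall_dist_flow_le [CompactSpace M] {N : Type*} [PseudoMetricSpace N]
    {f : ℝ → M → N} (hf : Continuous fun p : ℝ × M => f p.1 p.2) (L : ℝ) {ρ : ℝ} (hρ : 0 < ρ) :
    ∃ δ > 0, ∀ τ ∈ Set.Icc 0 L, ∀ u v : M, dist u v ≤ δ → dist (f τ u) (f τ v) ≤ ρ := by
  have huc : UniformContinuousOn (fun p : ℝ × M => f p.1 p.2) (Set.Icc 0 L ×ˢ Set.univ) :=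
    (isCompact_Icc.prod isCompact_univ).uniformContinuousOn_of_continuous hf.continuousOn
  obtain ⟨δ, hδ, h⟩ := Metric.uniformContinuousOn_iff_le.mp huc ρ hρ
  exact ⟨δ, hδ, fun τ hτ u v huv =>
    h (τ, u) ⟨hτ, trivial⟩ (τ, v) ⟨hτ, trivial⟩ (by simpa [Prod.dist_eq] using huv)⟩

def ChainDriftLE (φ : ℝ → M → M) (x : ℕ → M) (t : ℕ → ℝ) (k : ℕ) (L η : ℝ) : Prop :=
  ∀ a b : ℝ, 0 ≤ a → a ≤ b → b - a ≤ L →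
    dist (φ (b - a) (chainTraj φ x t k a)) (chainTraj φ x t k b) ≤ η

lemma ChainDriftLE.mono {L η η' : ℝ} (h : ChainDriftLE φ x t k L η) (hη : η ≤ η') :
    ChainDriftLE φ x t k L η' :=
  fun a b ha hab hbaL => (h a b ha hab hbaL).trans hη

lemma dist_flow_chainTraj_le (hφ₀ : ∀ y, φ 0 y = y) (hφ : ∀ s t y, φ (s + t) y = φ s (φ t y))
    (hT : 0 < T) (ht : ∀ i ≤ k, T ≤ t i) {L δ ρ : ℝ}
    (hρ : ∀ τ ∈ Set.Icc 0 L, ∀ u v, dist u v ≤ δ → dist (φ τ u) (φ τ v) ≤ ρ)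
    (hx : ∀ i < k, dist (φ (t i) (x i)) (x (i + 1)) ≤ δ) {a b : ℝ} (ha : 0 ≤ a) (hab : a ≤ b)
    (hbaL : b - a ≤ L) :
    dist (φ (b - a) (chainTraj φ x t k a)) (chainTraj φ x t k b) ≤
      (chainIdx t k b - chainIdx t k a : ℕ) * ρ := by
  obtain ⟨n, hn⟩ : ∃ n, chainIdx t k b - chainIdx t k a = n := ⟨_, rfl⟩
  induction n generalizing a with
  | zero =>
    have hidx : chainIdx t k a = chainIdx t k b := by
      have := chainIdx_mono (t := t) (k := k) ha hab
      omega
    have hflow : φ (b - a) (chainTraj φ x t k a) = chainTraj φ x t k b :=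
      flow_chainTraj_of_chainIdx_eq hφ hidx b
    rw [hflow, dist_self, hn, Nat.cast_zero, zero_mul]
  | succ n ih =>
    obtain ⟨i, hi⟩ : ∃ i, chainIdx t k a = i := ⟨_, rfl⟩
    have hib : i < chainIdx t k b := by omega
    have hik : i + 1 ≤ k := hib.trans_le (chainIdx_le t k b)
    have hac : a < finChainS t (i + 1) :=
      lt_finChainS_of_chainIdx_lt (hi ▸ lt_add_one i) hik
    have hcb : finChainS t (i + 1) ≤ b :=
      (finChainS_mono hT.le ht hib (by have := chainIdx_le t k b; omega)).trans
        (finChainS_chainIdx_le (ha.trans hab))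
    have hjump : dist (φ (b - a) (chainTraj φ x t k a))
        (φ (b - finChainS t (i + 1)) (chainTraj φ x t k (finChainS t (i + 1)))) ≤ ρ := by
      have hstep : φ (finChainS t (i + 1) - a) (chainTraj φ x t k a) = φ (t i) (x i) := by
        rw [flow_chainTraj_of_chainIdx_eq hφ hi, finChainS_succ, add_sub_cancel_left]
      rw [show b - a = (b - finChainS t (i + 1)) + (finChainS t (i + 1) - a) by ring, hφ,
        hstep, chainTraj_finChainS hφ₀ hT ht hik]
      exact hρ _ ⟨by linarith, by linarith⟩ _ _ (hx i (by omega))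
    have hrest_idx : chainIdx t k b - chainIdx t k (finChainS t (i + 1)) = n := by
      rw [chainIdx_finChainS hT ht hik]
      omega
    have hrest := ih (ha.trans hac.le) hcb (by linarith) hrest_idx
    rw [hrest_idx] at hrest
    calc _ ≤ _ := dist_triangle _ _ _
      _ ≤ ρ + n * ρ := add_le_add hjump hrest
      _ = _ := by rw [hn]; push_cast; ring

lemma chainDriftLE_of_forall_dist_flow_le (hφ₀ : ∀ y, φ 0 y = y)
    (hφ : ∀ s t y, φ (s + t) y = φ s (φ t y)) (hT : 0 < T) (ht : ∀ i ≤ k, T ≤ t i)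
    {L δ ρ : ℝ} (hρ₀ : 0 ≤ ρ)
    (hρ : ∀ τ ∈ Set.Icc 0 L, ∀ u v, dist u v ≤ δ → dist (φ τ u) (φ τ v) ≤ ρ)
    (hx : ∀ i < k, dist (φ (t i) (x i)) (x (i + 1)) ≤ δ) :
    ChainDriftLE φ x t k L ((L / T + 1) * ρ) := fun a b ha hab hbaL =>
  calc _ ≤ (chainIdx t k b - chainIdx t k a : ℕ) * ρ :=
        dist_flow_chainTraj_le hφ₀ hφ hT ht hρ hx ha hab hbaL
    _ ≤ ((b - a) / T + 1) * ρ := by gcongr; exact chainIdx_sub_le hT ht ha hab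
    _ ≤ (L / T + 1) * ρ := by gcongr

lemma isFinChainDT_sample {H : Set M} (hH : ∀ τ, Set.MapsTo (φ τ) H H) (hx : ∀ i ≤ k, x i ∈ H)
    {L η : ℝ} (hL : 0 ≤ L) (hdrift : ChainDriftLE φ x t k L η) (m : ℕ) :
    IsFinChainDT φ H η L m (fun j => chainTraj φ x t k (j * L)) (fun _ => L) := by
  refine ⟨fun j _ => chainTraj_mem hH hx _, fun _ _ => le_rfl, fun j _ => ?_⟩
  dsimp only
  rw [Nat.cast_add_one, add_one_mul]
  simpa using hdrift (j * L) (j * L + L) (by positivity) (by linarith) (by linarith)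

lemma finTracedVia_of_forall_dist_chainTraj_le (hT : 0 < T) (ht : ∀ i ≤ k, T ≤ t i)
    {ε : ℝ} {g : ℝ → ℝ} {z : M}
    (h : ∀ σ, 0 ≤ σ → σ ≤ finChainS t (k + 1) → dist (chainTraj φ x t k σ) (φ (g σ) z) ≤ ε) :
    FinTracedVia φ ε k x t g z := by
  refine ⟨fun i hik σ h₁ h₂ => ?_, ?_⟩
  · have := h σ ((finChainS_nonneg hT.le ht (by omega)).trans h₁)
      (h₂.le.trans (finChainS_mono hT.le ht (by omega) le_rfl))
    rwa [chainTraj, chainIdx_eq hT ht hik h₁ h₂] at this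
  · have hidx : chainIdx t k (finChainS t (k + 1)) = k := le_antisymm (chainIdx_le t k _)
      (le_chainIdx le_rfl (finChainS_mono hT.le ht (by omega) le_rfl))
    have := h _ (finChainS_nonneg hT.le ht le_rfl) le_rfl
    have hk : finChainS t (k + 1) - finChainS t k = t k := by
      rw [finChainS_succ, add_sub_cancel_left]
    rwa [chainTraj, hidx, hk] at this

lemma finTracedVia_of_sample (hT : 0 < T) (ht : ∀ i ≤ k, T ≤ t i) {L η η' : ℝ} (hL : 0 < L)
    (hdrift : ChainDriftLE φ x t k L η) {g : ℝ → ℝ} {z : M}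
    (htrace : FinTracedVia φ η' ⌊finChainS t (k + 1) / L⌋₊
      (fun j => chainTraj φ x t k (j * L)) (fun _ => L) g z) :
    FinTracedVia φ (η + η') k x t g z := by
  refine finTracedVia_of_forall_dist_chainTraj_le hT ht fun σ hσ₀ hσ => ?_
  set j := ⌊σ / L⌋₊
  have hjσ : j * L ≤ σ := (le_div_iff₀ hL).mp (Nat.floor_le (by positivity))
  have hσj : σ < (j + 1) * L := (div_lt_iff₀ hL).mp (Nat.lt_floor_add_one _)
  have hjm : j ≤ ⌊finChainS t (k + 1) / L⌋₊ := Nat.floor_mono (by gcongr)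
  have hsample := htrace.1 j hjm σ (by rwa [finChainS_const])
    (by rwa [finChainS_const, Nat.cast_add_one])
  rw [finChainS_const] at hsample
  calc _ ≤ dist (chainTraj φ x t k σ) (φ (σ - j * L) (chainTraj φ x t k (j * L))) +
        dist (φ (σ - j * L) (chainTraj φ x t k (j * L))) (φ (g σ) z) := dist_triangle _ _ _
    _ ≤ η + η' := by
      gcongr
      rw [dist_comm]
      exact hdrift _ _ (by positivity) hjσ (by linarith)

end Drift

theorem fpotp_iff_uniform_in_T_general {M : Type*} [MetricSpace M] [CompactSpace M]
    (φ : ℝ → M → M)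
    (hflow_cont : Continuous fun p : ℝ × M => φ p.1 p.2)
    (hflow_zero : ∀ x : M, φ 0 x = x)
    (hflow_add : ∀ s t : ℝ, ∀ x : M, φ (s + t) x = φ s (φ t x))
    (H : Set M) (hHinv : ∀ τ : ℝ, φ τ '' H = H) :
    FPOTP φ H ↔
      ∀ ε > (0 : ℝ), ∀ T > (0 : ℝ), ∃ δ > (0 : ℝ), ∀ k x t, IsFinChainDT φ H δ T k x t →
        ∃ z : M, ∃ g : ℝ → ℝ, IsRep g ∧ FinTracedVia φ ε k x t g z := by
  refine ⟨fun hF ε hε T hT => ?_, fun h ε hε => ?_⟩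
  · obtain ⟨δ₀, hδ₀, T₀, hT₀, htrace⟩ := hF (ε / 2) (half_pos hε)
    set η := min δ₀ (ε / 2)
    obtain ⟨δ, hδ, hρ⟩ :=
      exists_forall_dist_flow_le hflow_cont T₀ (ρ := η / (T₀ / T + 1)) (by positivity)
    refine ⟨δ, hδ, fun k x t ⟨hxH, ht, hjump⟩ => ?_⟩
    have hdrift : ChainDriftLE φ x t k T₀ η := by
      have := chainDriftLE_of_forall_dist_flow_le hflow_zero hflow_add hT ht (by positivity) hρ
        hjump
      rwa [mul_div_cancel₀ _ (by positivity)] at this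
    have hH : ∀ τ, Set.MapsTo (φ τ) H H :=
      fun τ => Set.mapsTo_iff_image_subset.mpr (hHinv τ).subset
    obtain ⟨z, g, hg, hz⟩ :=
      htrace _ _ _ (isFinChainDT_sample hH hxH hT₀.le (hdrift.mono (min_le_left _ _)) _)
    refine ⟨z, g, hg, ?_⟩
    simpa only [add_halves] using
      finTracedVia_of_sample hT ht hT₀ (hdrift.mono (min_le_right _ _)) hz
  · obtain ⟨δ, hδ, htrace⟩ := h ε hε 1 one_pos
    exact ⟨δ, hδ, 1, one_pos, htrace⟩

theorem fpotp_iff_uniform_in_T {M : Type*} [MetricSpace M] [CompactSpace M]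
    (φ : ℝ → M → M)
    (hflow_cont : Continuous fun p : ℝ × M => φ p.1 p.2)
    (hflow_zero : ∀ x : M, φ 0 x = x)
    (hflow_add : ∀ s t : ℝ, ∀ x : M, φ (s + t) x = φ s (φ t x))
    (H : Set M) (hHcomp : IsCompact H) (hHinv : ∀ τ : ℝ, φ τ '' H = H) :
    FPOTP φ H ↔
      ∀ ε > (0 : ℝ), ∀ T > (0 : ℝ), ∃ δ > (0 : ℝ), ∀ k x t, IsFinChainDT φ H δ T k x t →
        ∃ z : M, ∃ g : ℝ → ℝ, IsRep g ∧ FinTracedVia φ ε k x t g z :=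
  fpotp_iff_uniform_in_T_general φ hflow_cont hflow_zero hflow_add H hHinv
end
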